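/- Let r, s ∈ ℝ with max(r,s) = 0. If (u_ε)_{ε∈(0,1]} and (v_ε)_{ε∈(0,1]} are families of smooth functions on ℝⁿ satisfying the global Zygmund estimates of order r and of order s respectively, then for every σ > 0 the family of pointwise products (u_ε · v_ε)_{ε∈(0,1]} satisfies the global Zygmund estimates of order min(r,s) − σ. -/

import Mathlib

open MeasureTheory SchwartzMap Filter
open scoped FourierTransform Topology

noncomputable section

/-- `i`-th partial derivative of a function on `ℝⁿ`. -/
def pdE {n : ℕ} (i : Fin n) (f : EuclideanSpace ℝ (Fin n) → ℂ) :
    EuclideanSpace ℝ (Fin n) → ℂ :=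
  fun x => fderiv ℝ f x (EuclideanSpace.single i 1)

/-- The iterated partial derivative `∂^α` along the multi-index `α`. -/
def mderiv {n : ℕ} (α : Fin n → ℕ) (f : EuclideanSpace ℝ (Fin n) → ℂ) :
    EuclideanSpace ℝ (Fin n) → ℂ :=
  (List.finRange n).foldr (fun i g => (pdE i)^[α i] g) f

/-- A family `(u_ε)` of functions on `ℝⁿ` satisfies the global Zygmund estimates of
order `s` : as `ε → 0⁺`, `sup_x ‖∂^α u_ε x‖` is `O(1)` for `|α| < s`, `O(log(1/ε))` for
`|α| = s` and `O(ε^{s-|α|})` for `|α| > s`. -/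
def ZygGlobal {n : ℕ} (s : ℝ) (u : ℝ → EuclideanSpace ℝ (Fin n) → ℂ) : Prop :=
  ∀ α : Fin n → ℕ,
    (((∑ i, α i : ℕ) : ℝ) < s →
      ∃ C, ∀ᶠ ε in 𝓝[>] (0:ℝ), ∀ x, ‖mderiv α (u ε) x‖ ≤ C) ∧
    ((((∑ i, α i : ℕ) : ℝ) = s →
      ∃ C, ∀ᶠ ε in 𝓝[>] (0:ℝ), ∀ x, ‖mderiv α (u ε) x‖ ≤ C * Real.log (1/ε))) ∧
    (s < ((∑ i, α i : ℕ) : ℝ) →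
      ∃ C, ∀ᶠ ε in 𝓝[>] (0:ℝ), ∀ x, ‖mderiv α (u ε) x‖ ≤ C * ε ^ (s - (∑ i, α i : ℕ)))

namespace ZygAux

variable {n : ℕ}

/-- Iterated partial derivatives along a list of directions. -/
def derivL (l : List (Fin n)) (f : EuclideanSpace ℝ (Fin n) → ℂ) :
    EuclideanSpace ℝ (Fin n) → ℂ :=
  l.foldr (fun i g => pdE i g) f

lemma derivL_nil (f : EuclideanSpace ℝ (Fin n) → ℂ) : derivL [] f = f := rfl

lemma derivL_cons (i : Fin n) (l : List (Fin n)) (f : EuclideanSpace ℝ (Fin n) → ℂ) :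
    derivL (i :: l) f = pdE i (derivL l f) := rfl

lemma derivL_append (l₁ l₂ : List (Fin n)) (f : EuclideanSpace ℝ (Fin n) → ℂ) :
    derivL (l₁ ++ l₂) f = derivL l₁ (derivL l₂ f) := by
  simp [derivL, List.foldr_append]

lemma iterate_pdE (i : Fin n) (k : ℕ) (f : EuclideanSpace ℝ (Fin n) → ℂ) :
    (pdE i)^[k] f = derivL (List.replicate k i) f := by
  induction k with
  | zero => rfl
  | succ k ih => rw [Function.iterate_succ_apply', ih, List.replicate_succ, derivL_cons]

/-- The canonical (sorted) list of directions associated with a multi-index. -/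
def cList (α : Fin n → ℕ) : List (Fin n) :=
  (List.finRange n).flatMap (fun i => List.replicate (α i) i)

lemma mderiv_eq_derivL (α : Fin n → ℕ) (f : EuclideanSpace ℝ (Fin n) → ℂ) :
    mderiv α f = derivL (cList α) f := by
  unfold mderiv cList
  induction (List.finRange n) with
  | nil => rfl
  | cons i L ih =>
      rw [List.foldr_cons, ih, List.flatMap_cons, derivL_append, iterate_pdE]

lemma count_cList (α : Fin n → ℕ) (j : Fin n) : (cList α).count j = α j := by
  unfold cList
  rw [List.count_flatMap]
  have : ∀ i : Fin n, (List.count j ∘ fun i => List.replicate (α i) i) i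
      = if i = j then α j else 0 := by
    intro i
    simp only [Function.comp_apply, List.count_replicate, beq_iff_eq]
    by_cases h : i = j <;> simp [h]
  rw [List.map_congr_left (fun i _ => this i), ← Fin.sum_univ_def]
  simp

lemma sorted_cList (α : Fin n → ℕ) : (cList α).Pairwise (· ≤ ·) := by
  unfold cList
  rw [List.pairwise_flatMap]
  constructor
  · intro i _
    exact List.pairwise_replicate.mpr (Or.inr le_rfl)
  · refine (List.pairwise_lt_finRange n).imp ?_
    intro a b hab x hx y hy
    rw [List.eq_of_mem_replicate hx, List.eq_of_mem_replicate hy]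
    exact hab.le

lemma sorted_eq_cList {l : List (Fin n)} (hl : l.Pairwise (· ≤ ·)) :
    l = cList (fun i => l.count i) := by
  refine List.Perm.eq_of_pairwise' hl (sorted_cList _) ?_
  rw [List.perm_iff_count]
  intro a
  rw [count_cList]

lemma sum_count_eq_length (l : List (Fin n)) : ∑ i, l.count i = l.length := by
  induction l with
  | nil => simp
  | cons a t ih =>
      simp [List.count_cons, Finset.sum_add_distrib, ih]

/-- Select the entries of `l` at the positions where `c` is `true`. -/
def sel : List Bool → List (Fin n) → List (Fin n)
  | _, [] => []
  | [], _ :: _ => []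
  | b :: c, i :: t => if b then i :: sel c t else sel c t

lemma sel_sublist : ∀ (c : List Bool) (l : List (Fin n)), (sel c l).Sublist l := by
  intro c l
  induction l generalizing c with
  | nil => cases c <;> simp [sel]
  | cons i t ih =>
      cases c with
      | nil => simp [sel]
      | cons b c =>
          by_cases hb : b
          · simpa [sel, hb] using (ih c).cons₂ i
          · simpa [sel, hb] using (ih c).cons i

lemma length_sel_add : ∀ (c : List Bool) (l : List (Fin n)), c.length = l.length →
    (sel c l).length + (sel (c.map (!·)) l).length = l.length := by
  intro c l
  induction l generalizing c with
  | nil => intro _; cases c <;> simp [sel]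
  | cons i t ih =>
      intro hlen
      cases c with
      | nil => simp at hlen
      | cons b c =>
          have hlen' : c.length = t.length := by simpa using hlen
          have := ih c hlen'
          cases b <;> simp [sel] <;> omega

/-- All Boolean lists of length `m`. -/
def boolLists : ℕ → List (List Bool)
  | 0 => [[]]
  | m + 1 => (boolLists m).flatMap (fun c => [true :: c, false :: c])

lemma length_of_mem_boolLists : ∀ {m : ℕ} {c : List Bool}, c ∈ boolLists m → c.length = m := by
  intro m
  induction m with
  | zero => intro c hc; simp [boolLists] at hc; simp [hc]
  | succ m ih =>
      intro c hc
      simp only [boolLists, List.mem_flatMap, List.mem_cons, List.mem_singleton] at hc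
      obtain ⟨a, ha, hc⟩ := hc
      rcases hc with rfl | rfl | h
      · simp [ih ha]
      · simp [ih ha]
      · simp at h

lemma sum_flatMap {γ : Type*} (L : List γ) (F : γ → List ℂ) :
    ((L.flatMap F)).sum = (L.map fun c => (F c).sum).sum := by
  induction L with
  | nil => simp
  | cons a L ih => simp [List.flatMap_cons, List.sum_append, ih]

lemma norm_list_sum_le (l : List ℂ) : ‖l.sum‖ ≤ (l.map norm).sum := by
  induction l with
  | nil => simp
  | cons a l ih =>
      simp only [List.sum_cons, List.map_cons]
      exact (norm_add_le _ _).trans (by gcongr)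

/- analysis lemmas -/

lemma contDiff_pdE {f : EuclideanSpace ℝ (Fin n) → ℂ} (hf : ContDiff ℝ (⊤ : ℕ∞) f) (i : Fin n) :
    ContDiff ℝ (⊤ : ℕ∞) (pdE i f) :=
  (hf.fderiv_right (by simp)).clm_apply contDiff_const

lemma contDiff_derivL (l : List (Fin n)) {f : EuclideanSpace ℝ (Fin n) → ℂ}
    (hf : ContDiff ℝ (⊤ : ℕ∞) f) : ContDiff ℝ (⊤ : ℕ∞) (derivL l f) := by
  induction l with
  | nil => exact hf
  | cons i t ih => exact contDiff_pdE ih i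

lemma differentiable_listSum {γ : Type*} (L : List γ)
    (F : γ → EuclideanSpace ℝ (Fin n) → ℂ) (hF : ∀ a ∈ L, Differentiable ℝ (F a)) :
    Differentiable ℝ (fun y => (L.map (fun a => F a y)).sum) := by
  induction L with
  | nil => simpa using differentiable_const (0 : ℂ)
  | cons a L ih =>
      simp only [List.map_cons, List.sum_cons]
      exact (hF a (by simp)).add (ih fun b hb => hF b (by simp [hb]))

lemma pdE_add (i : Fin n) {f g : EuclideanSpace ℝ (Fin n) → ℂ}
    (x : EuclideanSpace ℝ (Fin n))
    (hf : DifferentiableAt ℝ f x) (hg : DifferentiableAt ℝ g x) :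
    pdE i (fun y => f y + g y) x = pdE i f x + pdE i g x := by
  unfold pdE
  rw [fderiv_fun_add hf hg]
  simp

lemma pdE_mul (i : Fin n) {f g : EuclideanSpace ℝ (Fin n) → ℂ}
    (x : EuclideanSpace ℝ (Fin n))
    (hf : DifferentiableAt ℝ f x) (hg : DifferentiableAt ℝ g x) :
    pdE i (fun y => f y * g y) x = pdE i f x * g x + f x * pdE i g x := by
  unfold pdE
  rw [fderiv_fun_mul hf hg]
  simp [smul_eq_mul]
  ring

lemma pdE_listSum (i : Fin n) {γ : Type*} (L : List γ)
    (F : γ → EuclideanSpace ℝ (Fin n) → ℂ) (hF : ∀ a ∈ L, Differentiable ℝ (F a)) :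
    pdE i (fun y => (L.map (fun a => F a y)).sum)
      = fun y => (L.map (fun a => pdE i (F a) y)).sum := by
  induction L with
  | nil =>
      funext x
      simp [pdE]
  | cons a L ih =>
      funext x
      have hL : Differentiable ℝ (fun y => (L.map (fun a => F a y)).sum) :=
        differentiable_listSum L F (fun b hb => hF b (by simp [hb]))
      simp only [List.map_cons, List.sum_cons]
      rw [pdE_add i x ((hF a (by simp)).differentiableAt) hL.differentiableAt,
        ih (fun b hb => hF b (by simp [hb]))]

/-- The Leibniz expansion of an iterated derivative of a product. -/
lemma derivL_mul (l : List (Fin n)) {u v : EuclideanSpace ℝ (Fin n) → ℂ}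
    (hu : ContDiff ℝ (⊤ : ℕ∞) u) (hv : ContDiff ℝ (⊤ : ℕ∞) v) :
    derivL l (fun y => u y * v y)
      = fun y => ((boolLists l.length).map
          (fun c => derivL (sel c l) u y * derivL (sel (c.map (!·)) l) v y)).sum := by
  induction l with
  | nil =>
      funext y
      simp [boolLists, derivL, sel]
  | cons i t ih =>
      have hdiff : ∀ c ∈ boolLists t.length,
          Differentiable ℝ (fun y => derivL (sel c t) u y * derivL (sel (c.map (!·)) t) v y) := by
        intro c _
        exact (((contDiff_derivL _ hu).mul (contDiff_derivL _ hv)).differentiable (by simp))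
      rw [derivL_cons, ih]
      rw [pdE_listSum i (boolLists t.length)
        (fun c => fun y => derivL (sel c t) u y * derivL (sel (c.map (!·)) t) v y) hdiff]
      funext y
      have hterm : ∀ c ∈ boolLists t.length,
          pdE i (fun z => derivL (sel c t) u z * derivL (sel (c.map (!·)) t) v z) y
            = derivL (i :: sel c t) u y * derivL (sel (c.map (!·)) t) v y
              + derivL (sel c t) u y * derivL (i :: sel (c.map (!·)) t) v y := by
        intro c _
        rw [pdE_mul i y
          (((contDiff_derivL _ hu).differentiable (by simp)).differentiableAt)
          (((contDiff_derivL _ hv).differentiable (by simp)).differentiableAt)]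
        rfl
      rw [List.map_congr_left hterm]
      have hlen : (i :: t).length = t.length + 1 := rfl
      rw [hlen]
      show _ = ((boolLists (t.length + 1)).map
          (fun c => derivL (sel c (i :: t)) u y * derivL (sel (c.map (!·)) (i :: t)) v y)).sum
      rw [show boolLists (t.length + 1)
          = (boolLists t.length).flatMap (fun c => [true :: c, false :: c]) from rfl]
      rw [List.map_flatMap, sum_flatMap]
      congr 1
      refine List.map_congr_left ?_
      intro c _
      simp only [List.map_cons, List.map_nil, List.sum_cons, List.sum_nil, add_zero]
      simp [sel]

/- quantitative lemmas -/

lemma zyg_bound {r : ℝ} {u : ℝ → EuclideanSpace ℝ (Fin n) → ℂ}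
    (hu : ZygGlobal r u) (hr : r ≤ 0) {τ : ℝ} (hτ : 0 < τ) (β : Fin n → ℕ) :
    ∃ C, 0 ≤ C ∧ ∀ᶠ ε in 𝓝[>] (0:ℝ), ∀ x,
      ‖mderiv β (u ε) x‖ ≤ C * ε ^ (r - τ - ((∑ i, β i : ℕ) : ℝ)) := by
  set k : ℝ := ((∑ i, β i : ℕ) : ℝ) with hk
  have hk0 : 0 ≤ k := Nat.cast_nonneg _
  rcases eq_or_lt_of_le (hr.trans hk0) with heq | hlt
  · -- r = k (hence r = k = 0) : use the logarithmic estimate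
    obtain ⟨C, hC⟩ := (hu β).2.1 heq.symm
    have hlog : ∀ᶠ ε in 𝓝[>] (0:ℝ), Real.log (1/ε) ≤ ε ^ (-τ) := by
      have h0 := (tendsto_log_mul_rpow_nhdsGT_zero hτ).eventually
        (eventually_mem_set.mpr (Metric.ball_mem_nhds (0:ℝ) one_pos))
      filter_upwards [h0, self_mem_nhdsWithin] with ε hball hε
      have hε' : (0:ℝ) < ε := hε
      have h1 : |Real.log ε| * |ε ^ τ| < 1 := by
        simpa [Real.dist_eq, abs_mul] using hball
      have h2 : -Real.log ε ≤ |Real.log ε| := neg_le_abs _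
      have h3 : |Real.log ε| * ε ^ τ ≤ 1 := by
        rw [abs_of_nonneg (Real.rpow_nonneg hε'.le τ)] at h1
        exact h1.le
      have h4 : |Real.log ε| ≤ ε ^ (-τ) := by
        rw [Real.rpow_neg hε'.le, ← one_div]
        exact (le_div_iff₀ (Real.rpow_pos_of_pos hε' τ)).mpr h3
      calc Real.log (1/ε) = -Real.log ε := by rw [one_div, Real.log_inv]
        _ ≤ |Real.log ε| := h2
        _ ≤ ε ^ (-τ) := h4
    refine ⟨max C 0, le_max_right _ _, ?_⟩
    filter_upwards [hC, hlog, self_mem_nhdsWithin,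
      Ioc_mem_nhdsGT_of_mem (Set.mem_Ico.mpr ⟨le_rfl, one_pos⟩ : (0:ℝ) ∈ Set.Ico 0 1)]
      with ε hCε hlogε hε hε1 x
    have hε' : (0:ℝ) < ε := hε
    have hlogpos : 0 ≤ Real.log (1/ε) := by
      rw [one_div, Real.log_inv]
      linarith [Real.log_nonpos hε'.le hε1.2]
    have : r - τ - k = -τ := by rw [← heq]; ring
    rw [this]
    calc ‖mderiv β (u ε) x‖ ≤ C * Real.log (1/ε) := hCε x
      _ ≤ max C 0 * Real.log (1/ε) := by
          apply mul_le_mul_of_nonneg_right (le_max_left _ _) hlogpos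
      _ ≤ max C 0 * ε ^ (-τ) := by
          apply mul_le_mul_of_nonneg_left hlogε (le_max_right _ _)
  · -- r < k : use the power estimate
    obtain ⟨C, hC⟩ := (hu β).2.2 hlt
    refine ⟨max C 0, le_max_right _ _, ?_⟩
    filter_upwards [hC, self_mem_nhdsWithin,
      Ioc_mem_nhdsGT_of_mem (Set.mem_Ico.mpr ⟨le_rfl, one_pos⟩ : (0:ℝ) ∈ Set.Ico 0 1)]
      with ε hCε hε hε1 x
    have hε' : (0:ℝ) < ε := hε
    calc ‖mderiv β (u ε) x‖ ≤ C * ε ^ (r - k) := hCε x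
      _ ≤ max C 0 * ε ^ (r - k) := by
          apply mul_le_mul_of_nonneg_right (le_max_left _ _) (Real.rpow_nonneg hε'.le _)
      _ ≤ max C 0 * ε ^ (r - τ - k) := by
          apply mul_le_mul_of_nonneg_left _ (le_max_right _ _)
          exact Real.rpow_le_rpow_of_exponent_ge hε' hε1.2 (by linarith)

lemma zyg_bound_finset {r : ℝ} {u : ℝ → EuclideanSpace ℝ (Fin n) → ℂ}
    (hu : ZygGlobal r u) (hr : r ≤ 0) {τ : ℝ} (hτ : 0 < τ) (S : Finset (Fin n → ℕ)) :
    ∃ C, 0 ≤ C ∧ ∀ᶠ ε in 𝓝[>] (0:ℝ), ∀ β ∈ S, ∀ x,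
      ‖mderiv β (u ε) x‖ ≤ C * ε ^ (r - τ - ((∑ i, β i : ℕ) : ℝ)) := by
  classical
  induction S using Finset.induction with
  | empty => exact ⟨0, le_rfl, Filter.Eventually.of_forall (by simp)⟩
  | @insert β S hβS ih =>
      obtain ⟨C1, hC10, h1⟩ := ih
      obtain ⟨C2, hC20, h2⟩ := zyg_bound hu hr hτ β
      refine ⟨max C1 C2, le_trans hC10 (le_max_left _ _), ?_⟩
      filter_upwards [h1, h2, self_mem_nhdsWithin] with ε h1ε h2ε hε γ hγ x
      have hε' : (0:ℝ) < ε := hε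
      rcases Finset.mem_insert.mp hγ with rfl | hγ
      · exact (h2ε x).trans
          (mul_le_mul_of_nonneg_right (le_max_right _ _) (Real.rpow_nonneg hε'.le _))
      · exact (h1ε γ hγ x).trans
          (mul_le_mul_of_nonneg_right (le_max_left _ _) (Real.rpow_nonneg hε'.le _))

end ZygAux

open ZygAux

/-- products, the case `max r s = 0`. -/
theorem zygGlobal_mul_zero {n : ℕ} (r s : ℝ) (hrs : max r s = 0)
    (u v : ℝ → EuclideanSpace ℝ (Fin n) → ℂ)
    (husmooth : ∀ ε ∈ Set.Ioc (0:ℝ) 1, ContDiff ℝ (⊤ : ℕ∞) (u ε))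
    (hvsmooth : ∀ ε ∈ Set.Ioc (0:ℝ) 1, ContDiff ℝ (⊤ : ℕ∞) (v ε))
    (hu : ZygGlobal r u) (hv : ZygGlobal s v) :
    ∀ σ > (0:ℝ), ZygGlobal (min r s - σ) (fun ε x => u ε x * v ε x) := by
  intro σ hσ α
  have hr : r ≤ 0 := hrs ▸ le_max_left r s
  have hs : s ≤ 0 := hrs ▸ le_max_right r s
  have hmin : min r s ≤ 0 := min_le_of_left_le hr
  have hsum : r + s = min r s := by
    have := min_add_max r s
    rw [hrs] at this
    simpa using this.symm
  have hm0 : (0:ℝ) ≤ ((∑ i, α i : ℕ) : ℝ) := Nat.cast_nonneg _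
  refine ⟨?_, ?_, ?_⟩
  · intro h; exfalso; linarith
  · intro h; exfalso; linarith
  · intro _
    have hτ : (0:ℝ) < σ / 2 := by linarith
    obtain ⟨Cu, hCu0, hCu⟩ := zyg_bound_finset hu hr hτ (Finset.Iic α)
    obtain ⟨Cv, hCv0, hCv⟩ := zyg_bound_finset hv hs hτ (Finset.Iic α)
    set m : ℕ := ∑ i, α i with hm
    refine ⟨((boolLists m).length : ℝ) * (Cu * Cv), ?_⟩
    filter_upwards [hCu, hCv, self_mem_nhdsWithin,
      Ioc_mem_nhdsGT_of_mem (Set.mem_Ico.mpr ⟨le_rfl, one_pos⟩ : (0:ℝ) ∈ Set.Ico 0 1)]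
      with ε hεu hεv hε hε1 x
    have hε' : (0:ℝ) < ε := hε
    have hus : ContDiff ℝ (⊤ : ℕ∞) (u ε) := husmooth ε hε1
    have hvs : ContDiff ℝ (⊤ : ℕ∞) (v ε) := hvsmooth ε hε1
    set l : List (Fin n) := cList α with hl
    have hl_len : l.length = m := by
      rw [hl]
      unfold cList
      rw [List.length_flatMap, ← Fin.sum_univ_def]
      simp [hm]
    -- the Leibniz expansion
    have hexp : mderiv α (fun x => u ε x * v ε x)
        = fun y => ((boolLists m).map
            (fun c => derivL (sel c l) (u ε) y * derivL (sel (c.map (!·)) l) (v ε) y)).sum := by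
      rw [mderiv_eq_derivL, ← hl, derivL_mul l hus hvs, hl_len]
    rw [hexp]
    -- bound each term of the sum
    have hbound : ∀ c ∈ (boolLists m).map
        (fun c => derivL (sel c l) (u ε) x * derivL (sel (c.map (!·)) l) (v ε) x),
        ‖c‖ ≤ Cu * Cv * ε ^ (min r s - σ - (m:ℝ)) := by
      intro z hz
      rw [List.mem_map] at hz
      obtain ⟨c, hc, rfl⟩ := hz
      have hclen : c.length = m := length_of_mem_boolLists hc
      -- the two sub-derivatives
      set l₁ : List (Fin n) := sel c l with hl₁
      set l₂ : List (Fin n) := sel (c.map (!·)) l with hl₂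
      have hsort : l.Pairwise (· ≤ ·) := sorted_cList α
      have hsort₁ : l₁.Pairwise (· ≤ ·) := List.Pairwise.sublist (sel_sublist c l) hsort
      have hsort₂ : l₂.Pairwise (· ≤ ·) :=
        List.Pairwise.sublist (sel_sublist (c.map (!·)) l) hsort
      set β : Fin n → ℕ := fun i => l₁.count i with hβ
      set γ : Fin n → ℕ := fun i => l₂.count i with hγ
      have hβle : β ∈ Finset.Iic α := by
        rw [Finset.mem_Iic]
        intro i
        have := (sel_sublist c l).count_le i
        rwa [← hl₁, count_cList] at this
      have hγle : γ ∈ Finset.Iic α := by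
        rw [Finset.mem_Iic]
        intro i
        have := (sel_sublist (c.map (!·)) l).count_le i
        rwa [← hl₂, count_cList] at this
      have hd₁ : derivL l₁ (u ε) = mderiv β (u ε) := by
        rw [mderiv_eq_derivL, ← sorted_eq_cList hsort₁]
      have hd₂ : derivL l₂ (v ε) = mderiv γ (v ε) := by
        rw [mderiv_eq_derivL, ← sorted_eq_cList hsort₂]
      have hk₁ : (∑ i, β i) = l₁.length := sum_count_eq_length l₁
      have hk₂ : (∑ i, γ i) = l₂.length := sum_count_eq_length l₂
      have hk12 : l₁.length + l₂.length = m := by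
        rw [hl₁, hl₂]
        rw [length_sel_add c l (by rw [hclen, hl_len])]
        exact hl_len
      have hu1 : ‖derivL l₁ (u ε) x‖ ≤ Cu * ε ^ (r - σ/2 - ((∑ i, β i : ℕ) : ℝ)) := by
        rw [hd₁]; exact hεu β hβle x
      have hv1 : ‖derivL l₂ (v ε) x‖ ≤ Cv * ε ^ (s - σ/2 - ((∑ i, γ i : ℕ) : ℝ)) := by
        rw [hd₂]; exact hεv γ hγle x
      rw [norm_mul]
      calc ‖derivL l₁ (u ε) x‖ * ‖derivL l₂ (v ε) x‖
          ≤ (Cu * ε ^ (r - σ/2 - ((∑ i, β i : ℕ) : ℝ)))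
            * (Cv * ε ^ (s - σ/2 - ((∑ i, γ i : ℕ) : ℝ))) := by
            apply mul_le_mul hu1 hv1 (norm_nonneg _)
            positivity
        _ = Cu * Cv * ε ^ (min r s - σ - (m:ℝ)) := by
            have hβγ : ((∑ i, β i : ℕ) : ℝ) + ((∑ i, γ i : ℕ) : ℝ) = (m:ℝ) := by
              rw [hk₁, hk₂, ← hk12]
              push_cast
              ring
            have hexp2 : (r - σ/2 - ((∑ i, β i : ℕ) : ℝ))
                + (s - σ/2 - ((∑ i, γ i : ℕ) : ℝ)) = min r s - σ - (m:ℝ) := by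
              rw [← hsum]
              linarith [hβγ]
            rw [mul_mul_mul_comm, ← Real.rpow_add hε', hexp2]
    calc ‖((boolLists m).map
          (fun c => derivL (sel c l) (u ε) x * derivL (sel (c.map (!·)) l) (v ε) x)).sum‖
        ≤ (((boolLists m).map
          (fun c => derivL (sel c l) (u ε) x * derivL (sel (c.map (!·)) l) (v ε) x)).map norm).sum :=
          norm_list_sum_le _
      _ ≤ (((boolLists m).map
          (fun c => derivL (sel c l) (u ε) x * derivL (sel (c.map (!·)) l) (v ε) x)).map norm).length
            • (Cu * Cv * ε ^ (min r s - σ - (m:ℝ))) := by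
          apply List.sum_le_card_nsmul
          intro y hy
          rw [List.mem_map] at hy
          obtain ⟨z, hz, rfl⟩ := hy
          exact hbound z hz
      _ = ((boolLists m).length : ℝ) * (Cu * Cv) * ε ^ (min r s - σ - (m:ℝ)) := by
          simp only [List.length_map, nsmul_eq_mul]
          ring
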